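/- arXiv:1604.04403 — 9 statements merged into one kernel-verified Lean document; each statement's English description precedes it below -/
import Mathlib

section
/- Every finite tree T with at least two vertices and exactly ℓ leaves can be partitioned into ℓ pairwise vertex-disjoint paths: there exist paths Q₁, …, Q_ℓ of T whose vertex sets are pairwise disjoint and whose union is the vertex set of T. -/
/-- A (nonempty) path of a graph `G`, given as its list of vertices:
distinct vertices, consecutive ones adjacent in `G`; a single vertex counts as a path. -/
def IsPathList {V : Type*} (G : SimpleGraph V) (l : List V) : Prop :=
  l ≠ [] ∧ l.Nodup ∧ l.Chain' G.Adj

/-!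
Root the tree at a leaf `r` and list the leaves as `r = l₀, l₁, …, l_{ℓ-1}`. The `i`-th path
consists of the vertices of the path from `lᵢ` to `r` that lie on no path from an earlier leaf to
`r`. The vertices on the root path of any vertex form a set closed under moving towards the root,
so what is removed from the root path of `lᵢ` is a final segment and what remains is again a path;
it contains `lᵢ`, since a leaf on a path is one of its ends. Every vertex lies on the root path of
some leaf (walk away from the root until stuck), so the pieces cover the tree.
-/

open Finset SimpleGraph

theorem List.filter_prefix_of_pairwise {α : Type*} {p : α → Bool} :
    ∀ {l : List α}, l.Pairwise (fun a b => p b → p a) → l.filter p <+: l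
  | [], _ => List.prefix_rfl
  | a :: l, h => by
    rw [List.pairwise_cons] at h
    by_cases ha : p a
    · rw [List.filter_cons_of_pos ha, List.cons_prefix_cons]
      exact ⟨rfl, List.filter_prefix_of_pairwise h.2⟩
    · rw [List.filter_cons_of_neg ha, List.filter_eq_nil_iff.2 fun b hb hpb => ha (h.1 b hb hpb)]
      exact List.nil_prefix

theorem SimpleGraph.Walk.IsPath.eq_or_eq_of_degree_eq_one {V : Type*} {G : SimpleGraph V}
    {u v x : V} [Fintype (G.neighborSet x)] {p : G.Walk u v} (hp : p.IsPath)
    (hx : x ∈ p.support) (hdeg : G.degree x = 1) : x = u ∨ x = v := by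
  induction p with
  | nil => simpa using hx
  | cons h q ih =>
    rw [Walk.cons_isPath_iff] at hp
    rw [Walk.support_cons, List.mem_cons] at hx
    obtain rfl | hx := hx
    · exact Or.inl rfl
    obtain rfl | rfl := ih hp.1 hx
    · cases q with
      | nil => exact Or.inr rfl
      | cons h' q =>
        obtain ⟨w, -, huniq⟩ := degree_eq_one_iff_existsUnique_adj.mp hdeg
        refine absurd ?_ hp.2
        rw [huniq _ h.symm, ← huniq _ h', Walk.support_cons]
        exact List.mem_cons_of_mem _ q.start_mem_support
    · exact Or.inr rfl

namespace SimpleGraph.IsTree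

variable {V : Type*} {G : SimpleGraph V}

noncomputable def rootPath (hT : G.IsTree) (r v : V) : List V :=
  (hT.existsUnique_path v r).exists.choose.support

variable {hT : G.IsTree} {r : V}

theorem rootPath_eq_support {v : V} {p : G.Walk v r} (hp : p.IsPath) :
    hT.rootPath r v = p.support :=
  congrArg Walk.support <|
    (hT.existsUnique_path v r).unique (hT.existsUnique_path v r).exists.choose_spec hp

theorem nodup_rootPath (v : V) : (hT.rootPath r v).Nodup :=
  (hT.existsUnique_path v r).exists.choose_spec.support_nodup

theorem isChain_rootPath (v : V) : (hT.rootPath r v).IsChain G.Adj :=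
  Walk.isChain_adj_support _

theorem mem_rootPath_self (v : V) : v ∈ hT.rootPath r v :=
  Walk.start_mem_support _

theorem head?_rootPath (v : V) : (hT.rootPath r v).head? = some v := by
  obtain ⟨p, hp, -⟩ := hT.existsUnique_path v r
  rw [rootPath_eq_support hp]
  cases p <;> rfl

theorem rootPath_injective : Function.Injective (hT.rootPath r) := fun u v h =>
  Option.some_injective _ <| by rw [← head?_rootPath (hT := hT), h, head?_rootPath]

theorem rootPath_cons {u w : V} (h : G.Adj u w) (hu : u ∉ hT.rootPath r w) :
    hT.rootPath r u = u :: hT.rootPath r w := by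
  obtain ⟨p, hp, -⟩ := hT.existsUnique_path w r
  rw [rootPath_eq_support hp] at hu ⊢
  rw [rootPath_eq_support (hp.cons hu (h := h)), Walk.support_cons]

theorem rootPath_suffix_support {v u : V} {p : G.Walk v r} (hp : p.IsPath)
    (hu : u ∈ p.support) : hT.rootPath r u <:+ p.support := by
  induction p with
  | nil =>
    rw [Walk.support_nil, List.mem_singleton] at hu
    rw [hu, rootPath_eq_support hp]
  | cons h q ih =>
    rw [Walk.support_cons, List.mem_cons] at hu
    obtain rfl | hu := hu
    · rw [rootPath_eq_support hp]
    · exact (ih hp.of_cons hu).trans (List.suffix_cons _ _)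

theorem pairwise_mem_rootPath_support {v : V} {p : G.Walk v r} (hp : p.IsPath) :
    p.support.Pairwise fun a b => b ∈ hT.rootPath r a := by
  induction p with
  | nil => simp
  | cons h q ih =>
    rw [Walk.support_cons, List.pairwise_cons, rootPath_eq_support hp, Walk.support_cons]
    exact ⟨fun b hb => List.mem_cons_of_mem _ hb, ih hp.of_cons⟩

theorem rootPath_suffix {u v : V} (hu : u ∈ hT.rootPath r v) :
    hT.rootPath r u <:+ hT.rootPath r v :=
  rootPath_suffix_support (hT.existsUnique_path v r).exists.choose_spec hu

theorem mem_rootPath_of_mem_rootPath {u v w : V} (hu : u ∈ hT.rootPath r v)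
    (hw : w ∈ hT.rootPath r u) : w ∈ hT.rootPath r v :=
  (rootPath_suffix hu).subset hw

theorem pairwise_rootPath (v : V) : (hT.rootPath r v).Pairwise fun a b => b ∈ hT.rootPath r a :=
  pairwise_mem_rootPath_support (hT.existsUnique_path v r).exists.choose_spec

theorem eq_of_mem_rootPath_of_mem_rootPath {u v : V} (huv : u ∈ hT.rootPath r v)
    (hvu : v ∈ hT.rootPath r u) : u = v :=
  rootPath_injective <| (rootPath_suffix huv).eq_of_length <|
    (rootPath_suffix huv).length_le.antisymm (rootPath_suffix hvu).length_le

theorem rootPath_eq_cons_of_adj_of_mem {u v : V} (h : G.Adj v u) (hu : u ∈ hT.rootPath r v) :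
    hT.rootPath r v = v :: hT.rootPath r u :=
  rootPath_cons h fun hv => h.ne (eq_of_mem_rootPath_of_mem_rootPath hv hu)

theorem eq_or_eq_of_mem_rootPath_of_degree_eq_one {v x : V} [Fintype (G.neighborSet x)]
    (hx : x ∈ hT.rootPath r v) (hdeg : G.degree x = 1) : x = v ∨ x = r :=
  (hT.existsUnique_path v r).exists.choose_spec.eq_or_eq_of_degree_eq_one hx hdeg

theorem exists_degree_eq_one_mem_rootPath [Fintype V] [DecidableRel G.Adj] [Nontrivial V]
    (v : V) : ∃ l, G.degree l = 1 ∧ v ∈ hT.rootPath r l := by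
  classical
  obtain ⟨w, hw, hmax⟩ := (univ.filter (v ∈ hT.rootPath r ·)).exists_max_image
    (fun w => (hT.rootPath r w).length) ⟨v, mem_filter.2 ⟨mem_univ _, mem_rootPath_self v⟩⟩
  rw [mem_filter] at hw
  have hparent : ∀ u, G.Adj w u → hT.rootPath r w = w :: hT.rootPath r u := by
    refine fun u hwu => rootPath_eq_cons_of_adj_of_mem hwu (by_contra fun hu => ?_)
    have hlong := rootPath_cons hwu.symm hu
    have := hmax u (mem_filter.2 ⟨mem_univ _, hlong ▸ List.mem_cons_of_mem _ hw.2⟩)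
    simp [hlong] at this
  obtain ⟨u, hwu⟩ :=
    (G.degree_pos_iff_exists_adj w).1 (hT.connected.preconnected.degree_pos_of_nontrivial w)
  refine ⟨w, degree_eq_one_iff_existsUnique_adj.2 ⟨u, hwu, fun u' hwu' => ?_⟩, hw.2⟩
  exact rootPath_injective (List.cons_injective ((hparent u' hwu').symm.trans (hparent u hwu)))

end SimpleGraph.IsTree

section DisjointedLists

variable {ι α : Type*} [Preorder ι] [LocallyFiniteOrderBot ι] [DecidableEq α]

def disjointedLists (L : ι → List α) (i : ι) : List α :=
  (L i).filter (· ∈ disjointed (fun j => (L j).toFinset) i)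

variable {L : ι → List α} {i : ι} {a : α}

theorem mem_disjointed_toFinset :
    a ∈ disjointed (fun j => (L j).toFinset) i ↔ a ∈ L i ∧ ∀ j < i, a ∉ L j := by
  simp [disjointed_apply]

theorem mem_disjointedLists : a ∈ disjointedLists L i ↔ a ∈ L i ∧ ∀ j < i, a ∉ L j := by
  rw [disjointedLists, List.mem_filter, decide_eq_true_iff, mem_disjointed_toFinset]
  exact and_iff_right_of_imp And.left

theorem disjointedLists_prefix (h : (L i).Pairwise fun a b => ∀ j < i, a ∈ L j → b ∈ L j) :
    disjointedLists L i <+: L i := by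
  refine List.filter_prefix_of_pairwise (h.imp_of_mem fun ha _ hab hb => ?_)
  simp only [decide_eq_true_eq, mem_disjointed_toFinset] at hb ⊢
  exact ⟨ha, fun j hj haj => hb.2 j hj (hab j hj haj)⟩

end DisjointedLists

theorem exists_mem_disjointedLists {ι α : Type*} [PartialOrder ι] [LocallyFiniteOrderBot ι]
    [Fintype ι] [DecidableEq α] {L : ι → List α} {i : ι} {a : α} (ha : a ∈ L i) :
    ∃ j, a ∈ disjointedLists L j := by
  have : a ∈ univ.sup (disjointed fun j => (L j).toFinset) := by
    rw [Fintype.sup_disjointed]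
    exact Finset.mem_sup.2 ⟨i, mem_univ _, List.mem_toFinset.2 ha⟩
  obtain ⟨j, -, hj⟩ := Finset.mem_sup.1 this
  exact ⟨j, List.mem_filter.2 ⟨(mem_disjointed_toFinset.1 hj).1, decide_eq_true hj⟩⟩

theorem notMem_disjointedLists_of_ne {ι α : Type*} [LinearOrder ι] [LocallyFiniteOrderBot ι]
    [DecidableEq α] {L : ι → List α} {i j : ι} {a : α} (hij : i ≠ j)
    (ha : a ∈ disjointedLists L i) : a ∉ disjointedLists L j := fun ha' =>
  Finset.disjoint_left.1 (disjoint_disjointed _ hij) (of_decide_eq_true (List.mem_filter.1 ha).2)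
    (of_decide_eq_true (List.mem_filter.1 ha').2)

/-- Every finite tree with at least two vertices and exactly `ℓ` leaves can be partitioned
into `ℓ` pairwise vertex-disjoint paths. -/
theorem tree_partition_into_leaves_many_paths
    {V : Type*} [Fintype V] [DecidableEq V]
    (G : SimpleGraph V) [DecidableRel G.Adj]
    (hT : G.IsTree) (hcard : 2 ≤ Fintype.card V)
    (ℓ : ℕ) (hℓ : (Finset.univ.filter fun v => G.degree v = 1).card = ℓ) :
    ∃ Q : Fin ℓ → List V,
      (∀ i, IsPathList G (Q i)) ∧
      (∀ i j, i ≠ j → ∀ v, v ∈ Q i → v ∉ Q j) ∧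
      (∀ v : V, ∃ i, v ∈ Q i) := by
  have : Nontrivial V := Fintype.one_lt_card_iff_nontrivial.mp hcard
  let leaf : Fin ℓ ≃ {v // v ∈ univ.filter fun v => G.degree v = 1} :=
    (Finset.equivFinOfCardEq hℓ).symm
  have hℓ_pos : 0 < ℓ := hℓ ▸ card_pos.2 <|
    let ⟨v, hv⟩ := hT.exists_vert_degree_one_of_nontrivial; ⟨v, by simpa using hv⟩
  have hdeg (i : Fin ℓ) : G.degree (leaf i) = 1 := (mem_filter.1 (leaf i).2).2
  -- The root is the first leaf, so a later leaf lies on no earlier path to the root.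
  let r : V := leaf ⟨0, hℓ_pos⟩
  let P (i : Fin ℓ) : List V := hT.rootPath r (leaf i)
  have hleaf_mem (i : Fin ℓ) : (leaf i : V) ∈ disjointedLists P i := by
    refine mem_disjointedLists.2 ⟨IsTree.mem_rootPath_self _, fun j hji hij => ?_⟩
    obtain h | h := IsTree.eq_or_eq_of_mem_rootPath_of_degree_eq_one hij (hdeg i)
    · exact hji.ne (leaf.injective (Subtype.ext h)).symm
    · obtain rfl : i = ⟨0, hℓ_pos⟩ := leaf.injective (Subtype.ext h)
      exact Nat.not_lt_zero _ hji
  refine ⟨disjointedLists P, fun i => ⟨List.ne_nil_of_mem (hleaf_mem i), ?_, ?_⟩,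
    fun i j hij v => notMem_disjointedLists_of_ne hij, fun v => ?_⟩
  · exact (IsTree.nodup_rootPath _).filter _
  · refine (IsTree.isChain_rootPath _).prefix (disjointedLists_prefix ?_)
    exact (IsTree.pairwise_rootPath _).imp fun hab j _ ha =>
      IsTree.mem_rootPath_of_mem_rootPath ha hab
  · obtain ⟨l, hl, hvl⟩ := IsTree.exists_degree_eq_one_mem_rootPath (hT := hT) (r := r) v
    obtain ⟨i, hi⟩ := leaf.surjective ⟨l, by simpa using hl⟩
    exact exists_mem_disjointedLists (i := i) (by simpa [P, hi] using hvl)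
end

section
/- Let T be a finite tree with vertex set C, let r ∈ C, and let ≻ be a linear order on C such that for all x, y ∈ C, if d(r, x) < d(r, y) then x ≻ y (where d is the graph distance in T). Then ≻ is single-peaked on T. -/
/-- `x` appears strictly before `y` in the list `l`. -/
def listBefore {V : Type*} (l : List V) (x y : V) : Prop :=
  ∃ i j : Fin l.length, i < j ∧ l.get i = x ∧ l.get j = y

/-- The restriction of `r` to the finite set `X` is single peaked with respect to the
restriction of `r'` to `X`: letting `p` be the element of `X` ranked first (within `X`)
by `r`, whenever `p ≻' x ≻' y` or `y ≻' x ≻' p` (for `x, y ∈ X`) we have `x ≻ y`. -/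
def SinglePeakedOn {V : Type*} (X : Finset V) (r r' : V → V → Prop) : Prop :=
  ∀ p ∈ X, (∀ x ∈ X, x ≠ p → r p x) →
    ∀ x ∈ X, ∀ y ∈ X, ((r' p x ∧ r' x y) ∨ (r' y x ∧ r' x p)) → r x y

/-- A linear order `r` on the vertex set of `G` is single peaked on the tree `G` if for
every path of `G` the restriction of `r` to the vertices of the path is single peaked
with respect to the order induced by the path. -/
def SinglePeakedOnTree {V : Type*} [DecidableEq V] (G : SimpleGraph V)
    (r : V → V → Prop) : Prop :=
  ∀ l : List V, l.Nodup → l.Chain' G.Adj →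
    SinglePeakedOn l.toFinset r (listBefore l)

/-! Distances to the root change by exactly one along every edge of a tree, and a vertex has at
most one neighbour closer to the root. Along a path in the tree the distance to the root therefore
never goes up and then down again: the vertex at the turn would have two distinct parents. So the
distance strictly increases in both directions away from the path's vertex nearest to the root,
and that vertex is the top of the path for any order ranking vertices nearer the root higher. -/

lemma listBefore_of_listBefore_reverse {V : Type*} {l : List V} {x y : V}
    (h : listBefore l.reverse x y) : listBefore l y x := by
  obtain ⟨i, j, hij, rfl, rfl⟩ := h
  have hj : (j : ℕ) < l.length := l.length_reverse ▸ j.2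
  refine ⟨⟨l.length - 1 - j, by omega⟩, ⟨l.length - 1 - i, by omega⟩, ?_, ?_, ?_⟩
  · rw [Fin.lt_def] at hij ⊢
    dsimp only
    omega
  · simp
  · simp

lemma listBefore_reverse {V : Type*} {l : List V} {x y : V} :
    listBefore l.reverse x y ↔ listBefore l y x :=
  ⟨listBefore_of_listBefore_reverse, fun h ↦
    listBefore_of_listBefore_reverse (l.reverse_reverse.symm ▸ h)⟩

namespace SimpleGraph

variable {V : Type*} {G : SimpleGraph V}

lemma Walk.dist_le_length_of_mem_support {u v w : V} (p : G.Walk u w) (hv : v ∈ p.support) :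
    G.dist u v ≤ p.length := by
  classical
  exact (dist_le _).trans (p.length_takeUntil_le_length hv)

lemma IsTree.eq_of_adj_of_dist_lt (hG : G.IsTree) {r a b c : V} (hab : G.Adj a b)
    (hcb : G.Adj c b) (ha : G.dist r a < G.dist r b) (hc : G.dist r c < G.dist r b) :
    a = c := by
  obtain ⟨P, hP, -⟩ := hG.connected.exists_path_of_dist r b
  have eq_penultimate : ∀ a, G.Adj a b → G.dist r a < G.dist r b → a = P.penultimate := by
    intro a hab ha
    obtain ⟨Q, hQ, hQlen⟩ := hG.connected.exists_path_of_dist r a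
    have hb : b ∉ Q.support := fun hb ↦
      (Q.dist_le_length_of_mem_support hb).not_gt (hQlen ▸ ha)
    exact hG.isAcyclic.eq_penultimate_of_adj_end hP hab.symm
      (hG.isAcyclic.mem_support_of_ne_mem_support_of_adj_of_isPath hP hQ hab.symm hb)
  rw [eq_penultimate a hab ha, eq_penultimate c hcb hc]

lemma IsTree.isChain_dist_eq_add_one (hG : G.IsTree) (r : V) :
    ∀ {a b : V} {l : List V}, (a :: b :: l).Nodup → (a :: b :: l).IsChain G.Adj →
      G.dist r b = G.dist r a + 1 →
      (a :: b :: l).IsChain (fun u v ↦ G.dist r v = G.dist r u + 1)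
  | a, b, [], _, _, hab => List.isChain_pair.2 hab
  | a, b, c :: l, hnd, hch, hab => by
    obtain ⟨had, hch⟩ := List.isChain_cons_cons.1 hch
    have hbc := (List.isChain_cons_cons.1 hch).1
    have hbc_up : G.dist r c = G.dist r b + 1 := by
      refine (hG.dist_eq_dist_add_one_of_adj r hbc).resolve_left fun hcb ↦ ?_
      obtain rfl : a = c := hG.eq_of_adj_of_dist_lt (r := r) had hbc.symm (by omega) (by omega)
      simp at hnd
    exact List.isChain_cons_cons.2
      ⟨hab, hG.isChain_dist_eq_add_one r (List.nodup_cons.1 hnd).2 hch hbc_up⟩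

lemma IsTree.pairwise_dist_lt_of_forall_dist_le (hG : G.IsTree) (r : V) {p : V} {l : List V}
    (hnd : (p :: l).Nodup) (hch : (p :: l).IsChain G.Adj)
    (hmin : ∀ v ∈ l, G.dist r p ≤ G.dist r v) :
    (p :: l).Pairwise (fun u v ↦ G.dist r u < G.dist r v) := by
  cases l with
  | nil => exact List.pairwise_singleton _ _
  | cons q l =>
    have hpq : G.dist r q = G.dist r p + 1 :=
      (hG.dist_eq_dist_add_one_of_adj r (List.isChain_cons_cons.1 hch).1).resolve_left
        fun h ↦ by have := hmin q List.mem_cons_self; omega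
    rw [← List.pairwise_map (f := G.dist r)]
    refine List.IsChain.pairwise ((List.isChain_map _).2 ?_)
    exact (hG.isChain_dist_eq_add_one r hnd hch hpq).imp fun u v h ↦ by omega

lemma IsTree.dist_lt_of_listBefore (hG : G.IsTree) (r : V) {l : List V} (hnd : l.Nodup)
    (hch : l.IsChain G.Adj) {p x y : V} (hmin : ∀ v ∈ l, G.dist r p ≤ G.dist r v)
    (hpx : listBefore l p x) (hxy : listBefore l x y) : G.dist r x < G.dist r y := by
  obtain ⟨i, j, hij, rfl, rfl⟩ := hpx
  obtain ⟨j', k, hjk, hj', rfl⟩ := hxy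
  obtain rfl : j = j' := (hnd.get_inj_iff.1 hj').symm
  have hdrop : l.drop i = l.get i :: l.drop (i + 1) := List.drop_eq_getElem_cons i.2
  have hmono := hG.pairwise_dist_lt_of_forall_dist_le r
    (hdrop ▸ hnd.sublist (List.drop_sublist _ _)) (hdrop ▸ hch.drop _)
    fun v hv ↦ hmin v (List.mem_of_mem_drop hv)
  rw [← hdrop, List.pairwise_iff_getElem] at hmono
  have := hmono (j - i) (k - i) (by rw [List.length_drop]; omega)
    (by rw [List.length_drop]; omega) (by omega)
  simpa [Nat.add_sub_cancel' hij.le, Nat.add_sub_cancel' (hij.trans hjk).le] using this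

end SimpleGraph

theorem levelOrder_singlePeaked_on_tree_general
    {V : Type*} [DecidableEq V] (G : SimpleGraph V) (hT : G.IsTree)
    (root : V) (succ : V → V → Prop) (hsto : IsStrictTotalOrder V succ)
    (hlevel : ∀ x y : V, G.dist root x < G.dist root y → succ x y) :
    SinglePeakedOnTree G succ := by
  intro l hnd hch p _ htop x _ y _ hcase
  have hmin : ∀ v ∈ l, G.dist root p ≤ G.dist root v := by
    intro v hv
    by_contra! hlt
    exact asymm (hlevel v p hlt) (htop v (List.mem_toFinset.2 hv) (by rintro rfl; omega))
  apply hlevel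
  rcases hcase with ⟨hpx, hxy⟩ | ⟨hyx, hxp⟩
  · exact hT.dist_lt_of_listBefore root hnd hch hmin hpx hxy
  · exact hT.dist_lt_of_listBefore root (List.nodup_reverse.2 hnd)
      (List.isChain_reverse.2 (hch.imp fun _ _ h ↦ h.symm)) (by simpa using hmin)
      (listBefore_reverse.2 hxp) (listBefore_reverse.2 hyx)

/-- Any linear order on the vertices of a finite tree which ranks vertices closer to a
fixed root `root` higher is single peaked on the tree. -/
theorem levelOrder_singlePeaked_on_tree
    {V : Type*} [Fintype V] [DecidableEq V] (G : SimpleGraph V) (hT : G.IsTree)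
    (root : V) (succ : V → V → Prop) (hsto : IsStrictTotalOrder V succ)
    (hlevel : ∀ x y : V, G.dist root x < G.dist root y → succ x y) :
    SinglePeakedOnTree G succ :=
  levelOrder_singlePeaked_on_tree_general G hT root succ hsto hlevel
end

section
/- Let T be a finite tree with vertex set C having at least one non-leaf vertex, let r be a non-leaf vertex of T, and let L ⊆ C be the set of leaves of T. Let ≻ be any linear order on C such that (i) every non-leaf vertex is preferred under ≻ to every leaf, and (ii) for all non-leaf vertices x, y, if d(r, x) < d(r, y) then x ≻ y (where d is the graph distance in T). Then ≻ is single-peaked on T. -/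
/-! Along a path in a tree the distance to the root changes by exactly one at each step, and
once it has gone up it keeps going up, because a vertex has only one neighbour closer to the
root. So an interior vertex `x` of a path is strictly closer to the root than one of any two
vertices lying on either side of it. If `p` is the peak of the order on the path and `x` lies
strictly between `p` and `y`, then `x` is not a leaf, hence neither is `p`, and `x` cannot be
closer to the root than `p`; so either `y` is a leaf or `x` is closer to the root than `y`. -/

lemma exists_eq_append_cons_of_listBefore {α : Type*} {l : List α} {u x w : α} (hl : l.Nodup)
    (hux : listBefore l u x) (hxw : listBefore l x w) :
    ∃ l₁ l₂, l = l₁ ++ x :: l₂ ∧ u ∈ l₁ ∧ w ∈ l₂ := by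
  obtain ⟨i, j, hij, rfl, rfl⟩ := hux
  obtain ⟨j', k, hjk, hj, rfl⟩ := hxw
  obtain rfl : j = j' := (hl.get_inj_iff.mp hj).symm
  refine ⟨l.take j, l.drop (j + 1), ?_, ?_, ?_⟩
  · rw [List.get_eq_getElem, ← List.drop_eq_getElem_cons, List.take_append_drop]
  · exact List.mem_take_iff_getElem.mpr ⟨i, by omega, rfl⟩
  · refine List.mem_drop_iff_getElem.mpr ⟨k - (j + 1), by omega, ?_⟩
    simp only [List.get_eq_getElem]
    congr
    omega

namespace SimpleGraph

variable {V : Type*} {G : SimpleGraph V}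

lemma degree_ne_one_of_adj_of_adj [Fintype V] [DecidableRel G.Adj] {v w₁ w₂ : V}
    (h₁ : G.Adj v w₁) (h₂ : G.Adj v w₂) (hne : w₁ ≠ w₂) : G.degree v ≠ 1 :=
  fun h => hne ((degree_eq_one_iff_existsUnique_adj.mp h).unique h₁ h₂)

lemma degree_ne_one_of_isChain_append_cons [Fintype V] [DecidableRel G.Adj]
    {l₁ l₂ : List V} {x : V}
    (hnd : (l₁ ++ x :: l₂).Nodup) (hch : (l₁ ++ x :: l₂).IsChain G.Adj)
    (h₁ : l₁ ≠ []) (h₂ : l₂ ≠ []) : G.degree x ≠ 1 := by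
  obtain ⟨z, l₂, rfl⟩ := List.exists_cons_of_ne_nil h₂
  obtain ⟨l₁, v, rfl⟩ := (List.eq_nil_or_concat' l₁).resolve_left h₁
  have hmid : [v, x, z] <:+: l₁ ++ [v] ++ x :: z :: l₂ := ⟨l₁, l₂, by simp⟩
  have hvz : v ≠ z := by have := hnd.sublist hmid.sublist; simp_all
  obtain ⟨hvx, hxz⟩ : G.Adj v x ∧ G.Adj x z := by simpa using hch.infix hmid
  exact degree_ne_one_of_adj_of_adj hvx.symm hxz hvz

lemma IsTree.eq_of_adj_of_dist_add_one_eq (hT : G.IsTree) (r : V) {u₁ u₂ v : V}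
    (h₁ : G.Adj u₁ v) (h₂ : G.Adj u₂ v)
    (hd₁ : G.dist r u₁ + 1 = G.dist r v) (hd₂ : G.dist r u₂ + 1 = G.dist r v) : u₁ = u₂ := by
  obtain ⟨P₁, -, hl₁⟩ := hT.connected.exists_path_of_dist r u₁
  obtain ⟨P₂, -, hl₂⟩ := hT.connected.exists_path_of_dist r u₂
  have hP₁ : (P₁.concat h₁).IsPath := Walk.isPath_of_length_eq_dist _ (by simp [hl₁, hd₁])
  have hP₂ : (P₂.concat h₂).IsPath := Walk.isPath_of_length_eq_dist _ (by simp [hl₂, hd₂])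
  have := (hT.isAcyclic.subsingleton_path r v).elim ⟨_, hP₁⟩ ⟨_, hP₂⟩
  exact (Walk.concat_inj (congrArg Subtype.val this)).1

lemma IsTree.dist_lt_of_adj_of_dist_lt (hT : G.IsTree) (r : V) {u v w : V}
    (huv : G.Adj u v) (hvw : G.Adj v w) (huw : u ≠ w) (h : G.dist r u < G.dist r v) :
    G.dist r v < G.dist r w := by
  have hu := hT.dist_eq_dist_add_one_of_adj r huv
  have hw := hT.dist_eq_dist_add_one_of_adj r hvw
  by_contra! hwv
  exact huw (hT.eq_of_adj_of_dist_add_one_eq r huv hvw.symm (by omega) (by omega))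

lemma IsTree.pairwise_dist_lt_of_dist_lt (hT : G.IsTree) (r : V) :
    ∀ {a b : V} {l : List V}, (a :: b :: l).Nodup → (a :: b :: l).IsChain G.Adj →
      G.dist r a < G.dist r b → (a :: b :: l).Pairwise (G.dist r · < G.dist r ·)
  | _, _, [], _, _, h => by simpa using h
  | a, b, c :: l, hnd, hch, h => by
    rw [List.isChain_cons_cons, List.isChain_cons_cons] at hch
    have hac : a ≠ c := by simp only [List.nodup_cons, List.mem_cons] at hnd; tauto
    have hbc := hT.dist_lt_of_adj_of_dist_lt r hch.1 hch.2.1 hac h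
    have ih :=
      hT.pairwise_dist_lt_of_dist_lt r hnd.of_cons (List.isChain_cons_cons.mpr hch.2) hbc
    refine List.pairwise_cons.mpr ⟨?_, ih⟩
    intro y hy
    rcases List.mem_cons.mp hy with rfl | hy
    · exact h
    · exact h.trans (List.rel_of_pairwise_cons ih hy)

lemma IsTree.dist_lt_or_dist_lt (hT : G.IsTree) (r : V) {l₁ l₂ : List V} {u x w : V}
    (hnd : (l₁ ++ x :: l₂).Nodup) (hch : (l₁ ++ x :: l₂).IsChain G.Adj)
    (hu : u ∈ l₁) (hw : w ∈ l₂) : G.dist r x < G.dist r u ∨ G.dist r x < G.dist r w := by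
  obtain ⟨z, l₂, rfl⟩ := List.exists_cons_of_ne_nil (List.ne_nil_of_mem hw)
  obtain ⟨l₁, v, rfl⟩ := (List.eq_nil_or_concat' l₁).resolve_left (List.ne_nil_of_mem hu)
  have hmid : [v, x, z] <:+: l₁ ++ [v] ++ x :: z :: l₂ := ⟨l₁, l₂, by simp⟩
  have hvz : v ≠ z := by have := hnd.sublist hmid.sublist; simp_all
  obtain ⟨hvx, hxz⟩ : G.Adj v x ∧ G.Adj x z := by simpa using hch.infix hmid
  rcases (hT.dist_ne_of_adj r hxz).lt_or_gt with hxz' | hzx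
  · have := hT.pairwise_dist_lt_of_dist_lt r hnd.of_append_right hch.right_of_append hxz'
    exact .inr (List.rel_of_pairwise_cons this hw)
  rcases (hT.dist_ne_of_adj r hvx).lt_or_gt with hvx' | hxv
  · -- `x` would have two distinct neighbours closer to `r`
    exact absurd (hT.dist_lt_of_adj_of_dist_lt r hvx hxz hvz hvx') hzx.not_gt
  rw [show l₁ ++ [v] ++ x :: z :: l₂ = (l₁ ++ [v, x]) ++ z :: l₂ by simp] at hnd hch
  have hnd' : (x :: v :: l₁.reverse).Nodup := by
    simpa using List.nodup_reverse.mpr hnd.of_append_left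
  have hch' : (x :: v :: l₁.reverse).IsChain G.Adj := by
    simpa using List.isChain_reverse.mpr (hch.left_of_append.imp fun _ _ h => h.symm)
  have := hT.pairwise_dist_lt_of_dist_lt r hnd' hch' hxv
  exact .inl (List.rel_of_pairwise_cons this (by simpa [or_comm] using hu))

end SimpleGraph

theorem levelOrder_leavesLast_singlePeaked_on_tree_general
    {V : Type*} [Fintype V] [DecidableEq V] (G : SimpleGraph V) [DecidableRel G.Adj]
    (hT : G.IsTree) (root : V)
    (succ : V → V → Prop) (hsto : IsStrictTotalOrder V succ)
    (hleaf : ∀ x y : V, G.degree x ≠ 1 → G.degree y = 1 → succ x y)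
    (hlevel : ∀ x y : V, G.degree x ≠ 1 → G.degree y ≠ 1 →
      G.dist root x < G.dist root y → succ x y) :
    SinglePeakedOnTree G succ := by
  intro l hnd hch p _ hpeak x hx y _ hcase
  obtain ⟨l₁, l₂, rfl, hpy⟩ :
      ∃ l₁ l₂, l = l₁ ++ x :: l₂ ∧ (p ∈ l₁ ∧ y ∈ l₂ ∨ y ∈ l₁ ∧ p ∈ l₂) := by
    rcases hcase with ⟨hpx, hxy⟩ | ⟨hyx, hxp⟩
    · obtain ⟨l₁, l₂, rfl, hp, hy⟩ := exists_eq_append_cons_of_listBefore hnd hpx hxy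
      exact ⟨l₁, l₂, rfl, .inl ⟨hp, hy⟩⟩
    · obtain ⟨l₁, l₂, rfl, hy, hp⟩ := exists_eq_append_cons_of_listBefore hnd hyx hxp
      exact ⟨l₁, l₂, rfl, .inr ⟨hy, hp⟩⟩
  have hx' : x ∉ l₁ ++ l₂ := (List.nodup_cons.mp (List.nodup_middle.mp hnd)).1
  have hpx : succ p x :=
    hpeak x hx (by rintro rfl; rcases hpy with ⟨hp, -⟩ | ⟨-, hp⟩ <;> simp_all)
  obtain ⟨hl₁, hl₂⟩ : l₁ ≠ [] ∧ l₂ ≠ [] := by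
    rcases hpy with ⟨h₁, h₂⟩ | ⟨h₁, h₂⟩ <;> exact ⟨List.ne_nil_of_mem h₁, List.ne_nil_of_mem h₂⟩
  have hxleaf : G.degree x ≠ 1 := G.degree_ne_one_of_isChain_append_cons hnd hch hl₁ hl₂
  have := hsto
  have hpleaf : G.degree p ≠ 1 := fun hp => asymm (hleaf x p hxleaf hp) hpx
  by_cases hyleaf : G.degree y = 1
  · exact hleaf x y hxleaf hyleaf
  have hdist : G.dist root x < G.dist root p ∨ G.dist root x < G.dist root y := by
    rcases hpy with ⟨hp, hy⟩ | ⟨hy, hp⟩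
    · exact hT.dist_lt_or_dist_lt root hnd hch hp hy
    · exact (hT.dist_lt_or_dist_lt root hnd hch hy hp).symm
  rcases hdist with h | h
  · exact absurd hpx (asymm (hlevel x p hxleaf hpleaf h))
  · exact hlevel x y hxleaf hyleaf h

/-- Let `root` be a non-leaf vertex of a finite tree `G`.  Any linear order on the
vertices which (i) prefers every non-leaf vertex to every leaf and (ii) among non-leaf
vertices prefers vertices closer to `root`, is single peaked on the tree. -/
theorem levelOrder_leavesLast_singlePeaked_on_tree
    {V : Type*} [Fintype V] [DecidableEq V] (G : SimpleGraph V) [DecidableRel G.Adj]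
    (hT : G.IsTree) (root : V) (hroot : G.degree root ≠ 1)
    (succ : V → V → Prop) (hsto : IsStrictTotalOrder V succ)
    (hleaf : ∀ x y : V, G.degree x ≠ 1 → G.degree y = 1 → succ x y)
    (hlevel : ∀ x y : V, G.degree x ≠ 1 → G.degree y ≠ 1 →
      G.dist root x < G.dist root y → succ x y) :
    SinglePeakedOnTree G succ :=
  levelOrder_leavesLast_singlePeaked_on_tree_general G hT root succ hsto hleaf hlevel
end

section
/- Let T be a finite tree with ℓ leaves that has at least one non-leaf vertex. Then the number of linear orders on the vertex set of T that are single-peaked on T is at least ℓ!. -/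
/-!
Enumerate the vertices so that each one is adjacent to an earlier one. Ranking vertices by their
position gives a linear order all of whose upper sets induce subtrees, and such an order is single
peaked on the tree: if `x` lies on the path from the peak `p` to `y` but is ranked below `y`, the
vertices ranked above `x` form a subtree containing `p` and `y` but not `x`, contradicting the
uniqueness of paths in a tree.

Starting from a non-leaf, such an enumeration can be grown by walking towards any prescribed
sequence of leaves in turn; since the inner vertices of a path are not leaves, the leaves are
reached exactly in the prescribed order. Distinct orderings of the leaves therefore yield distinct
single-peaked orders.
-/

section ListBefore

variable {α : Type*} {l s t : List α} {a b x : α}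

theorem listBefore_iff_eq_append :
    listBefore l a b ↔ ∃ s m t, l = s ++ a :: m ++ b :: t := by
  constructor
  · rintro ⟨i, j, hij, rfl, rfl⟩
    have hi : l[(i : ℕ)] ∈ l.take j := List.mem_take_iff_getElem.2 ⟨i, by omega, rfl⟩
    obtain ⟨s, m, hs⟩ := List.append_of_mem hi
    refine ⟨s, m, l.drop (j + 1), ?_⟩
    simp only [List.get_eq_getElem]
    rw [← hs, ← List.drop_eq_getElem_cons, List.take_append_drop]
  · rintro ⟨s, m, t, rfl⟩
    refine ⟨⟨s.length, by simp⟩, ⟨(s ++ a :: m).length, by simp⟩, ?_, ?_, ?_⟩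
    · simp [Fin.lt_def]
    · simp
    · simp only [List.get_eq_getElem, List.getElem_append_right (Nat.le_refl _), Nat.sub_self,
        List.getElem_cons_zero]

theorem listBefore_append_of_mem_of_mem (ha : a ∈ s) (hb : b ∈ t) :
    listBefore (s ++ t) a b := by
  obtain ⟨s₁, s₂, rfl⟩ := List.append_of_mem ha
  obtain ⟨t₁, t₂, rfl⟩ := List.append_of_mem hb
  exact listBefore_iff_eq_append.2 ⟨s₁, s₂ ++ t₁, t₂, by simp⟩

theorem pairwise_listBefore (l : List α) : l.Pairwise (listBefore l) :=
  List.pairwise_iff_getElem.2 fun i j hi hj hij => ⟨⟨i, hi⟩, ⟨j, hj⟩, hij, rfl, rfl⟩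

namespace List.Nodup

theorem not_listBefore_self (hl : l.Nodup) : ¬ listBefore l a a := by
  rintro h
  obtain ⟨s, m, t, rfl⟩ := listBefore_iff_eq_append.1 h
  simp [List.nodup_append] at hl

theorem ne_of_listBefore (hl : l.Nodup) (h : listBefore l a b) : a ≠ b := by
  rintro rfl
  exact hl.not_listBefore_self h

theorem listBefore_append_cons_left_iff (hl : (s ++ x :: t).Nodup) :
    listBefore (s ++ x :: t) a x ↔ a ∈ s := by
  refine ⟨fun h => ?_, fun h => listBefore_append_of_mem_of_mem h List.mem_cons_self⟩
  have hx := (List.nodup_cons.1 (List.nodup_middle.1 hl)).1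
  rw [List.mem_append, not_or] at hx
  obtain ⟨s', m, t', h⟩ := listBefore_iff_eq_append.1 h
  obtain ⟨rfl, -⟩ := (List.append_cons_inj_of_notMem hx.1 hx.2).1 h
  simp

theorem listBefore_append_cons_right_iff (hl : (s ++ x :: t).Nodup) :
    listBefore (s ++ x :: t) x b ↔ b ∈ t := by
  refine ⟨fun h => ?_, fun h => ?_⟩
  · have hx := (List.nodup_cons.1 (List.nodup_middle.1 hl)).1
    rw [List.mem_append, not_or] at hx
    obtain ⟨s', m, t', h⟩ := listBefore_iff_eq_append.1 h
    simp only [List.append_assoc, List.cons_append] at h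
    obtain ⟨-, -, rfl⟩ := (List.append_cons_inj_of_notMem hx.1 hx.2).1 h
    simp
  · simpa using listBefore_append_of_mem_of_mem (s := s ++ [x]) (a := x) (by simp) h

end List.Nodup

theorem isStrictTotalOrder_listBefore (hl : l.Nodup) (hall : ∀ v, v ∈ l) :
    IsStrictTotalOrder α (listBefore l) where
  irrefl _ := hl.not_listBefore_self
  trans a b c hab hbc := by
    obtain ⟨s, t, rfl⟩ := List.append_of_mem (hall b)
    exact listBefore_append_of_mem_of_mem (hl.listBefore_append_cons_left_iff.1 hab)
      (List.mem_cons_of_mem _ (hl.listBefore_append_cons_right_iff.1 hbc))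
  trichotomous a b hab hba := by
    obtain ⟨s, t, rfl⟩ := List.append_of_mem (hall b)
    rcases List.mem_append.1 (hall a) with ha | ha
    · exact absurd (hl.listBefore_append_cons_left_iff.2 ha) hab
    rcases List.mem_cons.1 ha with rfl | ha
    · rfl
    · exact absurd (hl.listBefore_append_cons_right_iff.2 ha) hba

end ListBefore

namespace SimpleGraph

variable {V : Type*} {G : SimpleGraph V} {L : List V}

theorem IsAcyclic.support_subset_of_preconnected_induce (hG : G.IsAcyclic) {S : Set V}
    (hS : (G.induce S).Preconnected) {a b : V} (ha : a ∈ S) (hb : b ∈ S) {W : G.Walk a b}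
    (hW : W.IsPath) : {x | x ∈ W.support} ⊆ S := by
  classical
  obtain ⟨W'⟩ := hS ⟨a, ha⟩ ⟨b, hb⟩
  have hW' : {x | x ∈ (W'.map (Embedding.induce S).toHom).support} ⊆ S := by
    intro x hx
    obtain ⟨y, -, rfl⟩ := List.mem_map.1 ((Walk.support_map _ _) ▸ hx)
    exact y.2
  have huniq : (⟨W, hW⟩ : G.Path a b) = (W'.map (Embedding.induce S).toHom).toPath :=
    (hG.subsingleton_path a b).elim _ _
  intro x hx
  apply hW'
  apply Walk.support_toPath_subset_support
  rw [← huniq]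
  exact hx

theorem exists_isPath_mem_support_of_listBefore {l : List V} (hl : l.Nodup)
    (hc : l.IsChain G.Adj) {a x b : V} (h₁ : listBefore l a x) (h₂ : listBefore l x b) :
    ∃ W : G.Walk a b, W.IsPath ∧ x ∈ W.support := by
  obtain ⟨s, m, t, rfl⟩ := listBefore_iff_eq_append.1 h₁
  obtain ⟨m', t', rfl⟩ := List.append_of_mem (hl.listBefore_append_cons_right_iff.1 h₂)
  have hseg : a :: (m ++ x :: m') ++ [b] <:+: s ++ a :: m ++ x :: (m' ++ b :: t') :=
    ⟨s, t', by simp⟩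
  have hne : a :: (m ++ x :: m') ++ [b] ≠ [] := by simp
  refine ⟨(Walk.ofSupport _ hne (hc.infix hseg)).copy (by simp) (by simp), ?_, ?_⟩
  · rw [Walk.isPath_def, Walk.support_copy, Walk.support_ofSupport]
    exact hl.sublist hseg.sublist
  · simp only [Walk.support_copy, Walk.support_ofSupport]
    simp

inductive IsConnectedOrdering (G : SimpleGraph V) : List V → Prop
  | singleton (v : V) : G.IsConnectedOrdering [v]
  | snoc {L : List V} {u v : V} : G.IsConnectedOrdering L → v ∉ L → u ∈ L → G.Adj u v →
      G.IsConnectedOrdering (L ++ [v])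

namespace IsConnectedOrdering

theorem nodup (hL : G.IsConnectedOrdering L) : L.Nodup := by
  induction hL with
  | singleton v => exact List.nodup_singleton v
  | snoc _ hv _ _ ih => exact List.nodup_append.2 ⟨ih, List.nodup_singleton _, by grind⟩

theorem ne_nil (hL : G.IsConnectedOrdering L) : L ≠ [] := by
  cases hL <;> simp

theorem dropLast (hL : G.IsConnectedOrdering L) (hne : L.dropLast ≠ []) :
    G.IsConnectedOrdering L.dropLast := by
  cases hL with
  | singleton v => simp at hne
  | snoc hL' _ _ _ => simpa using hL'

theorem of_append {s t : List V} (h : G.IsConnectedOrdering (s ++ t)) (hs : s ≠ []) :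
    G.IsConnectedOrdering s := by
  induction t using List.reverseRecOn with
  | nil => simpa using h
  | append_singleton t c ih =>
    apply ih
    simpa [← List.append_assoc] using h.dropLast (by simp [← List.append_assoc, hs])

theorem connected_induce (hL : G.IsConnectedOrdering L) :
    (G.induce {v | v ∈ L}).Connected := by
  induction hL with
  | singleton v => simpa using (Walk.nil : G.Walk v v).connected_induce_support
  | @snoc L u v _ _ hu huv ih =>
    have hv : (G.induce {v}).Preconnected := by simp
    have hLv : {x | x ∈ L ++ [v]} = {x | x ∈ L} ∪ {v} := by ext; simp [or_comm]
    rw [hLv]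
    exact connected_induce_union ih.preconnected hv hu rfl huv

end IsConnectedOrdering

theorem singlePeakedOnTree_listBefore [DecidableEq V] (hG : G.IsAcyclic)
    (hL : G.IsConnectedOrdering L) (hall : ∀ v, v ∈ L) :
    SinglePeakedOnTree G (listBefore L) := by
  have := isStrictTotalOrder_listBefore hL.nodup hall
  intro l hl hc p _ hpeak x hx y _ hpxy
  obtain ⟨W, hW, hxW, hpx, hxy⟩ :
      ∃ W : G.Walk p y, W.IsPath ∧ x ∈ W.support ∧ p ≠ x ∧ x ≠ y := by
    rcases hpxy with ⟨h₁, h₂⟩ | ⟨h₁, h₂⟩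
    · obtain ⟨W, hW, hxW⟩ := exists_isPath_mem_support_of_listBefore hl hc h₁ h₂
      exact ⟨W, hW, hxW, hl.ne_of_listBefore h₁, hl.ne_of_listBefore h₂⟩
    · obtain ⟨W, hW, hxW⟩ := exists_isPath_mem_support_of_listBefore hl hc h₁ h₂
      exact ⟨W.reverse, hW.reverse, by simpa using hxW, (hl.ne_of_listBefore h₂).symm,
        (hl.ne_of_listBefore h₁).symm⟩
  obtain ⟨s, t, rfl⟩ := List.append_of_mem (hall x)
  have hp : p ∈ s := hL.nodup.listBefore_append_cons_left_iff.1 (hpeak x hx hpx.symm)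
  rcases trichotomous_of (listBefore (s ++ x :: t)) x y with h | rfl | h
  · exact h
  · exact absurd rfl hxy
  · have hy : y ∈ s := hL.nodup.listBefore_append_cons_left_iff.1 h
    have hs := (hL.of_append (List.ne_nil_of_mem hp)).connected_induce
    have hxs := hG.support_subset_of_preconnected_induce hs.preconnected hp hy hW hxW
    exact (List.disjoint_of_nodup_append hL.nodup hxs List.mem_cons_self).elim

theorem Walk.exists_adj_boundary_of_isPath {S : Set V} {a t : V} (W : G.Walk a t)
    (hW : W.IsPath) (ha : a ∈ S) (ht : t ∉ S) :
    ∃ u ∈ S, ∃ v ∉ S, G.Adj u v ∧ (v = t ∨ ∃ z ≠ u, G.Adj v z) := by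
  induction W with
  | nil => exact absurd ha ht
  | @cons a b t h W ih =>
    by_cases hb : b ∈ S
    · exact ih hW.of_cons hb ht
    refine ⟨a, ha, b, hb, h, ?_⟩
    cases W with
    | nil => exact Or.inl rfl
    | @cons _ c _ h' W' =>
      refine Or.inr ⟨c, fun hca => ((cons_isPath_iff _ _).1 hW).2 ?_, h'⟩
      rw [← hca]
      simp

theorem degree_ne_one_of_adj_of_adj_s6 {v u z : V} [Fintype (G.neighborSet v)] (hu : G.Adj v u)
    (hz : G.Adj v z) (huz : u ≠ z) : G.degree v ≠ 1 :=
  fun h => huz ((degree_eq_one_iff_existsUnique_adj.1 h).unique hu hz)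

namespace IsConnectedOrdering

variable [Fintype V] [DecidableRel G.Adj]

theorem exists_snoc (hG : G.Preconnected) (hL : G.IsConnectedOrdering L) {t : V} (ht : t ∉ L) :
    ∃ v ∉ L, G.IsConnectedOrdering (L ++ [v]) ∧ (G.degree v = 1 → v = t) := by
  classical
  obtain ⟨a, ha⟩ := List.exists_mem_of_ne_nil _ hL.ne_nil
  obtain ⟨u, hu, v, hv, huv, hvt⟩ :=
    (hG a t).some.toPath.1.exists_adj_boundary_of_isPath (S := {x | x ∈ L})
      (hG a t).some.toPath.2 ha ht
  refine ⟨v, hv, hL.snoc hv hu huv, fun h1 => hvt.resolve_right ?_⟩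
  rintro ⟨z, hzu, hvz⟩
  exact degree_ne_one_of_adj_of_adj_s6 huv.symm hvz hzu.symm h1

theorem exists_append_complete_sublist (hG : G.Preconnected) (hL : G.IsConnectedOrdering L)
    {ts : List V} (hts : ts.Nodup) (hleaf : ∀ t ∈ ts, G.degree t = 1)
    (hdisj : ∀ t ∈ ts, t ∉ L) :
    ∃ M, G.IsConnectedOrdering (L ++ M) ∧ (∀ v, v ∈ L ++ M) ∧ ts.Sublist M := by
  induction h : Fintype.card V - L.length using Nat.strong_induction_on generalizing L ts with
  | _ n ih =>
  by_cases hall : ∀ v, v ∈ L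
  · have hts : ts = [] := List.eq_nil_iff_forall_not_mem.2 fun t ht => hdisj t ht (hall t)
    exact ⟨[], by simpa using hL, by simpa using hall, by simp [hts]⟩
  -- walk towards the next prescribed leaf, or towards any missing vertex once all are reached
  obtain ⟨t, htL, hthead⟩ : ∃ t ∉ L, ∀ t' ∈ ts.head?, t' = t := by
    rcases ts with _ | ⟨t, ts⟩
    · simpa using hall
    · exact ⟨t, hdisj t List.mem_cons_self, by simp⟩
  obtain ⟨v, hvL, hLv, hvt⟩ := hL.exists_snoc hG htL
  have hlt : Fintype.card V - (L ++ [v]).length < n := by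
    have := hLv.nodup.length_le_card
    simp only [List.length_append, List.length_singleton] at this ⊢
    omega
  by_cases hvts : v ∈ ts
  · obtain ⟨ts, rfl⟩ : ∃ ts', ts = v :: ts' := by
      rcases ts with _ | ⟨t', ts⟩
      · simp at hvts
      · obtain rfl : t' = v := (hthead t' rfl).trans (hvt (hleaf v hvts)).symm
        exact ⟨ts, rfl⟩
    obtain ⟨M, hM, hallM, hsub⟩ := ih _ hlt hLv hts.of_cons
      (fun t ht => hleaf t (List.mem_cons_of_mem _ ht))
      (fun t ht => by
        simp [hdisj t (List.mem_cons_of_mem _ ht),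
          ne_of_mem_of_not_mem ht (List.nodup_cons.1 hts).1])
      rfl
    exact ⟨v :: M, by simpa using hM, by simpa using hallM, hsub.cons_cons v⟩
  · obtain ⟨M, hM, hallM, hsub⟩ := ih _ hlt hLv hts hleaf
      (fun t ht => by simp [hdisj t ht, ne_of_mem_of_not_mem ht hvts]) rfl
    exact ⟨v :: M, by simpa using hM, by simpa using hallM, hsub.cons v⟩

end IsConnectedOrdering

theorem IsTree.exists_connectedOrdering_sublist [Fintype V] [DecidableRel G.Adj]
    (hT : G.IsTree) {v₀ : V} (hv₀ : G.degree v₀ ≠ 1) {ts : List V} (hts : ts.Nodup)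
    (hleaf : ∀ t ∈ ts, G.degree t = 1) :
    ∃ L, G.IsConnectedOrdering L ∧ (∀ v, v ∈ L) ∧ ts.Sublist L := by
  obtain ⟨M, hM, hall, hsub⟩ :=
    (IsConnectedOrdering.singleton v₀).exists_append_complete_sublist hT.connected.preconnected
      hts hleaf fun t ht h => hv₀ (List.mem_singleton.1 h ▸ hleaf t ht)
  exact ⟨_, hM, hall, hsub.trans (List.sublist_append_right _ _)⟩

end SimpleGraph

theorem Equiv.eq_of_forall_lt_rel {α : Type*} {n : ℕ} {r : α → α → Prop}
    (hr : ∀ a b, r a b → ¬ r b a) {σ σ' : Fin n ≃ α} (h : ∀ i j, i < j → r (σ i) (σ j))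
    (h' : ∀ i j, i < j → r (σ' i) (σ' j)) : σ = σ' := by
  have hperm : (List.ofFn σ).Perm (List.ofFn σ') :=
    (List.perm_ext_iff_of_nodup (List.nodup_ofFn.2 σ.injective)
      (List.nodup_ofFn.2 σ'.injective)).2 fun a => by
        simp [List.mem_ofFn, σ.surjective a, σ'.surjective a]
  have := hperm.eq_of_pairwise (fun a b _ _ hab hba => (hr a b hab hba).elim)
    (List.pairwise_ofFn.2 h) (List.pairwise_ofFn.2 h')
  exact Equiv.ext (congrFun (List.ofFn_injective this))

open SimpleGraph

/-- For a finite tree with `ℓ` leaves having at least one non-leaf vertex, the number of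
linear orders on its vertex set that are single peaked on it is at least `ℓ!`. -/
theorem singlePeaked_count_ge_factorial_leaves
    {V : Type*} [Fintype V] [DecidableEq V] (G : SimpleGraph V) [DecidableRel G.Adj]
    (hT : G.IsTree) (hnonleaf : ∃ v : V, G.degree v ≠ 1)
    (ℓ : ℕ) (hℓ : (Finset.univ.filter fun v => G.degree v = 1).card = ℓ) :
    Nat.factorial ℓ ≤
      Nat.card {r : V → V → Prop //
        IsStrictTotalOrder V r ∧ SinglePeakedOnTree G r} := by
  obtain ⟨v₀, hv₀⟩ := hnonleaf
  set leaves := Finset.univ.filter fun v => G.degree v = 1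
  have hext : ∀ σ : Fin ℓ ≃ leaves, ∃ L, G.IsConnectedOrdering L ∧ (∀ v, v ∈ L) ∧
      (List.ofFn fun i => (σ i : V)).Sublist L := by
    intro σ
    refine hT.exists_connectedOrdering_sublist hv₀
      (List.nodup_ofFn.2 (Subtype.val_injective.comp σ.injective)) fun t ht => ?_
    obtain ⟨i, rfl⟩ := List.mem_ofFn.1 ht
    exact (Finset.mem_filter.1 (σ i).2).2
  choose L hL hall hsub using hext
  let f (σ : Fin ℓ ≃ leaves) :
      {r : V → V → Prop // IsStrictTotalOrder V r ∧ SinglePeakedOnTree G r} :=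
    ⟨listBefore (L σ), isStrictTotalOrder_listBefore (hL σ).nodup (hall σ),
      singlePeakedOnTree_listBefore hT.isAcyclic (hL σ) (hall σ)⟩
  have hf : Function.Injective f := by
    intro σ σ' h
    have hord (σ) : ∀ i j, i < j → listBefore (L σ) (σ i) (σ j) :=
      List.pairwise_ofFn.1 ((pairwise_listBefore _).sublist (hsub σ))
    have hr : listBefore (L σ) = listBefore (L σ') := congrArg Subtype.val h
    have := isStrictTotalOrder_listBefore (hL σ).nodup (hall σ)
    exact Equiv.eq_of_forall_lt_rel (r := fun a b : leaves => listBefore (L σ) a b)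
      (fun a b => asymm_of _) (hord σ) (by rw [hr]; exact hord σ')
  calc ℓ.factorial = Nat.card (Fin ℓ ≃ leaves) := by
        rw [Nat.card_eq_fintype_card, Fintype.card_equiv (Finset.equivFinOfCardEq hℓ).symm,
          Fintype.card_fin]
    _ ≤ _ := Nat.card_le_card_of_injective f hf
end

section
/- Let T be a caterpillar tree with central path (p₁, …, p_s) and with every remaining vertex a leaf adjacent to some pᵢ. Let ≻ be a linear order on the vertex set of T such that (i) the restriction of ≻ to {p₁, …, p_s} is single-peaked with respect to the order p₁ ≻' p₂ ≻' ⋯ ≻' p_s, and (ii) every central-path vertex is preferred under ≻ to every off-path leaf (the off-path leaves being ordered arbitrarily among themselves). Then ≻ is single-peaked on T. -/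
/-! Let `p, x, y` be vertices in this order along a path of the caterpillar whose
`≻`-top is `p`. The interior vertex `x` has degree at least two, so it lies on the spine, and then
so does `p`, since spine vertices beat leaves. If `y` is a leaf, `x ≻ y` outright. Otherwise, by
uniqueness of paths in a tree, the part of the path from `p` to `y` is the spine segment between
them, so `x` lies between `p` and `y` on the spine and single-peakedness of the spine gives
`x ≻ y`. -/

open List

namespace List

variable {α : Type*} {l : List α} {a b c x : α}

theorem Nodup.triple_sublist (hl : l.Nodup) (hab : [a, b] <+ l) (hbc : [b, c] <+ l) :
    [a, b, c] <+ l := by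
  induction l with
  | nil => simp at hab
  | cons d t ih =>
    rw [nodup_cons] at hl
    rw [sublist_cons_iff] at hab hbc ⊢
    grind

theorem pair_sublist_or_pair_sublist (hab : a ≠ b) (ha : a ∈ l) (hb : b ∈ l) :
    [a, b] <+ l ∨ [b, a] <+ l := by
  induction l with
  | nil => simp at ha
  | cons d t ih =>
    simp only [mem_cons] at ha hb
    rw [sublist_cons_iff, sublist_cons_iff]
    grind

theorem exists_infix_of_cons_append_sublist {xs : List α}
    (h : a :: (xs ++ [b]) <+ l) : ∃ m, xs <+ m ∧ a :: (m ++ [b]) <:+: l := by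
  obtain ⟨r₁, r₂, rfl, ha, h⟩ := cons_sublist_iff.mp h
  obtain ⟨r₃, r₄, rfl, hxs, hb⟩ := append_sublist_iff.mp h
  obtain ⟨u, v, rfl⟩ := append_of_mem ha
  obtain ⟨w, z, rfl⟩ := append_of_mem (singleton_sublist.mp hb)
  refine ⟨v ++ r₃ ++ w, ?_, u, z, by simp⟩
  exact (hxs.trans (sublist_append_right v r₃)).trans (sublist_append_left _ w)

theorem exists_infix_of_triple_sublist (h : [a, x, b] <+ l) : ∃ u w, [u, x, w] <:+: l := by
  induction l generalizing a with
  | nil => simp at h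
  | cons c t ih =>
    rcases sublist_cons_iff.mp h with h | ⟨_, hr, h⟩
    · obtain ⟨u, w, huw⟩ := ih h
      exact ⟨u, w, infix_cons huw⟩
    · obtain ⟨rfl, rfl⟩ := cons.inj hr
      match t, h with
      | d :: t, h =>
        rcases sublist_cons_iff.mp h with h | ⟨_, hr, h⟩
        · obtain ⟨u, w, huw⟩ := ih (h.cons_cons d)
          exact ⟨u, w, infix_cons huw⟩
        · obtain ⟨rfl, rfl⟩ := cons.inj hr
          match t, h with
          | e :: t, _ => exact ⟨a, e, [], t, rfl⟩

end List

theorem listBefore_iff_sublist {α : Type*} {l : List α} {a b : α} :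
    listBefore l a b ↔ [a, b] <+ l := by
  constructor
  · rintro ⟨i, j, hij, rfl, rfl⟩
    simpa using map_getElem_sublist (l := l) (is := [i, j]) (by simpa using hij)
  · intro h
    obtain ⟨is, his, hlt⟩ := sublist_eq_map_getElem h
    rcases is with _ | ⟨i, _ | ⟨j, _ | _⟩⟩ <;> simp only [map_cons, map_nil, cons.injEq,
      reduceCtorEq, and_false, and_true] at his
    exact ⟨i, j, by simpa using hlt, his.1.symm, his.2.symm⟩

namespace SimpleGraph

variable {V : Type*} {G : SimpleGraph V}

theorem IsAcyclic.eq_of_isChain_of_nodup (hG : G.IsAcyclic) {l₁ l₂ : List V}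
    (h₁ : l₁ ≠ []) (h₂ : l₂ ≠ []) (hc₁ : l₁.IsChain G.Adj) (hc₂ : l₂.IsChain G.Adj)
    (hn₁ : l₁.Nodup) (hn₂ : l₂.Nodup)
    (hhead : l₁.head h₁ = l₂.head h₂) (hlast : l₁.getLast h₁ = l₂.getLast h₂) : l₁ = l₂ := by
  let w₁ := Walk.ofSupport l₁ h₁ hc₁
  let w₂ := (Walk.ofSupport l₂ h₂ hc₂).copy hhead.symm hlast.symm
  have hw : w₁ = w₂ := congrArg Subtype.val <| (hG.subsingleton_path _ _).elim
    ⟨w₁, (Walk.isPath_def _).mpr (by simpa [w₁] using hn₁)⟩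
    ⟨w₂, (Walk.isPath_def _).mpr (by simpa [w₂] using hn₂)⟩
  simpa [w₁, w₂] using congrArg Walk.support hw

theorem IsAcyclic.triple_sublist_of_pair_sublist (hG : G.IsAcyclic) {l l' : List V}
    (hc : l.IsChain G.Adj) (hn : l.Nodup) (hc' : l'.IsChain G.Adj) (hn' : l'.Nodup)
    {a x b : V} (h : [a, x, b] <+ l) (h' : [a, b] <+ l') : [a, x, b] <+ l' := by
  obtain ⟨m, hxm, hm⟩ := exists_infix_of_cons_append_sublist (xs := [x]) h
  obtain ⟨m', -, hm'⟩ := exists_infix_of_cons_append_sublist (xs := []) h'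
  have hmm' : a :: (m ++ [b]) = a :: (m' ++ [b]) :=
    hG.eq_of_isChain_of_nodup (by simp) (by simp) (hc.infix hm) (hc'.infix hm')
      (hn.sublist hm.sublist) (hn'.sublist hm'.sublist) rfl (by simp)
  calc [a, x, b] <+ a :: (m ++ [b]) := (hxm.append (Sublist.refl [b])).cons_cons a
    _ = a :: (m' ++ [b]) := hmm'
    _ <+ l' := hm'.sublist

theorem one_lt_degree_of_triple_sublist {l : List V} (hc : l.IsChain G.Adj) (hn : l.Nodup)
    {a x b : V} [Fintype (G.neighborSet x)] (h : [a, x, b] <+ l) : 1 < G.degree x := by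
  obtain ⟨u, w, huw⟩ := exists_infix_of_triple_sublist h
  have hadj : G.Adj u x ∧ G.Adj x w := by simpa using hc.infix huw
  have hne : u ≠ w := by have := hn.sublist huw.sublist; simp_all
  rw [← card_neighborFinset_eq_degree, Finset.one_lt_card]
  exact ⟨u, by simpa using hadj.1.symm, w, by simpa using hadj.2, hne⟩

end SimpleGraph

theorem Finset.Nonempty.exists_forall_ne_rel {α : Type*} (r : α → α → Prop)
    [IsStrictTotalOrder α r] {s : Finset α} (hs : s.Nonempty) :
    ∃ m ∈ s, ∀ x ∈ s, x ≠ m → r m x := by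
  classical
  let := linearOrderOfSTO r
  obtain ⟨m, hm, hmin⟩ := s.exists_min_image id hs
  exact ⟨m, hm, fun x hx hxm => lt_of_le_of_ne (hmin x hx) hxm.symm⟩

theorem SinglePeakedOn.rel_of_between {V : Type*} {X : Finset V} {r r' : V → V → Prop}
    [IsStrictTotalOrder V r] (hsp : SinglePeakedOn X r r')
    (htot : ∀ a ∈ X, ∀ b ∈ X, a ≠ b → r' a b ∨ r' b a) (hirr : ∀ a, ¬r' a a)
    {p x y : V} (hp : p ∈ X) (hx : x ∈ X) (hy : y ∈ X) (hpx : r p x)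
    (hxy : (r' p x ∧ r' x y) ∨ (r' y x ∧ r' x p)) : r x y := by
  obtain ⟨m, hm, htop⟩ := Finset.Nonempty.exists_forall_ne_rel r ⟨x, hx⟩
  have hsp := hsp m hm htop
  obtain rfl | hxm := eq_or_ne x m
  · refine htop y hy ?_
    rintro rfl
    rcases hxy with ⟨-, h⟩ | ⟨h, -⟩ <;> exact hirr _ h
  rcases htot m hm x hx hxm.symm with hmx | hxm
  · rcases hxy with ⟨-, hxy⟩ | ⟨-, hxp⟩
    · exact hsp x hx y hy (Or.inl ⟨hmx, hxy⟩)
    · exact absurd (hsp x hx p hp (Or.inl ⟨hmx, hxp⟩)) (asymm hpx)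
  · rcases hxy with ⟨hpx', -⟩ | ⟨hyx, -⟩
    · exact absurd (hsp x hx p hp (Or.inr ⟨hpx', hxm⟩)) (asymm hpx)
    · exact hsp x hx y hy (Or.inr ⟨hyx, hxm⟩)

open SimpleGraph

theorem List.IsChain.reverse_adj {V : Type*} {G : SimpleGraph V} {l : List V}
    (hc : l.IsChain G.Adj) : l.reverse.IsChain G.Adj :=
  isChain_reverse.mpr (hc.imp fun _ _ h => h.symm)

theorem rel_of_triple_sublist_of_caterpillar {V : Type*} [DecidableEq V] {G : SimpleGraph V}
    [G.LocallyFinite] (hG : G.IsAcyclic) {P : List V} (hPn : P.Nodup) (hPc : P.IsChain G.Adj)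
    (hleaf : ∀ v, v ∉ P → G.degree v ≤ 1) {succ : V → V → Prop} [IsStrictTotalOrder V succ]
    (hspine : SinglePeakedOn P.toFinset succ (listBefore P))
    (hpref : ∀ x ∈ P, ∀ y, y ∉ P → succ x y)
    {l : List V} (hc : l.IsChain G.Adj) (hn : l.Nodup) {p x y : V}
    (hpeak : ∀ z ∈ l, z ≠ p → succ p z) (h : [p, x, y] <+ l) : succ x y := by
  have hxP : x ∈ P := by
    by_contra hxP
    exact (hleaf x hxP).not_gt (one_lt_degree_of_triple_sublist hc hn h)
  obtain ⟨⟨hp_ne_x, hp_ne_y⟩, -⟩ : (p ≠ x ∧ p ≠ y) ∧ x ≠ y := by simpa using hn.sublist h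
  have hpx : succ p x := hpeak x (h.subset (by simp)) hp_ne_x.symm
  have hpP : p ∈ P := by
    by_contra hpP
    exact asymm hpx (hpref x hxP p hpP)
  by_cases hyP : y ∈ P
  swap
  · exact hpref x hxP y hyP
  have hbetween : [p, x, y] <+ P ∨ [y, x, p] <+ P := by
    rcases pair_sublist_or_pair_sublist hp_ne_y hpP hyP with h' | h'
    · exact Or.inl (hG.triple_sublist_of_pair_sublist hc hn hPc hPn h h')
    · exact Or.inr <| hG.triple_sublist_of_pair_sublist hc.reverse_adj
        (nodup_reverse.mpr hn) hPc hPn (reverse_sublist.mpr h) h'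
  refine hspine.rel_of_between ?_ (fun a => ?_) (mem_toFinset.mpr hpP)
    (mem_toFinset.mpr hxP) (mem_toFinset.mpr hyP) hpx ?_
  · simp only [mem_toFinset, listBefore_iff_sublist]
    exact fun a ha b hb hab => pair_sublist_or_pair_sublist hab ha hb
  · simpa [listBefore_iff_sublist] using nodup_iff_sublist.mp hPn a
  · simp only [listBefore_iff_sublist]
    rcases hbetween with hb | hb
    · exact Or.inl ⟨Sublist.trans (by simp) hb, Sublist.trans (by simp) hb⟩
    · exact Or.inr ⟨Sublist.trans (by simp) hb, Sublist.trans (by simp) hb⟩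

theorem caterpillar_singlePeaked_general
    {V : Type*} [Fintype V] [DecidableEq V] (G : SimpleGraph V) [DecidableRel G.Adj]
    (hT : G.IsTree)
    (P : List V) (hPnd : P.Nodup) (hPch : P.Chain' G.Adj)
    (hcat : ∀ v : V, v ∉ P → G.degree v = 1 ∧ ∃ u ∈ P, G.Adj v u)
    (succ : V → V → Prop) (hsto : IsStrictTotalOrder V succ)
    (hspine : SinglePeakedOn P.toFinset succ (listBefore P))
    (hpref : ∀ x ∈ P, ∀ y : V, y ∉ P → succ x y) :
    SinglePeakedOnTree G succ := by
  intro l hn hc p _ hpeak x _ y _ hxy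
  simp only [mem_toFinset] at hpeak
  have hleaf : ∀ v, v ∉ P → G.degree v ≤ 1 := fun v hv => (hcat v hv).1.le
  simp only [listBefore_iff_sublist] at hxy
  rcases hxy with ⟨hpx, hxy⟩ | ⟨hyx, hxp⟩
  · exact rel_of_triple_sublist_of_caterpillar hT.isAcyclic hPnd hPch hleaf hspine hpref hc hn
      hpeak (hn.triple_sublist hpx hxy)
  · exact rel_of_triple_sublist_of_caterpillar hT.isAcyclic hPnd hPch hleaf hspine hpref
      hc.reverse_adj (nodup_reverse.mpr hn) (by simpa using hpeak)
      (reverse_sublist.mpr (hn.triple_sublist hyx hxp))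

/-- Let `G` be a caterpillar tree with central path `P` (every vertex off the path is a
leaf adjacent to some vertex of `P`).  Any linear order whose restriction to the central
path is single peaked with respect to the path order and which prefers every
central-path vertex to every off-path leaf is single peaked on `G`. -/
theorem caterpillar_singlePeaked
    {V : Type*} [Fintype V] [DecidableEq V] (G : SimpleGraph V) [DecidableRel G.Adj]
    (hT : G.IsTree)
    (P : List V) (hPne : P ≠ []) (hPnd : P.Nodup) (hPch : P.Chain' G.Adj)
    (hcat : ∀ v : V, v ∉ P → G.degree v = 1 ∧ ∃ u ∈ P, G.Adj v u)
    (succ : V → V → Prop) (hsto : IsStrictTotalOrder V succ)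
    (hspine : SinglePeakedOn P.toFinset succ (listBefore P))
    (hpref : ∀ x ∈ P, ∀ y : V, y ∉ P → succ x y) :
    SinglePeakedOnTree G succ :=
  caterpillar_singlePeaked_general G hT P hPnd hPch hcat succ hsto hspine hpref
end

section
/- Let T be a star with center c and m ≥ 3 vertices. A linear order ≻ on the vertex set of T is single-peaked on T if and only if c occupies the first or the second position of ≻. -/
/-- The star with center `c`: `c` is adjacent to every other vertex and these are the
only edges. -/
def starGraph {V : Type*} (c : V) : SimpleGraph V :=
  SimpleGraph.fromRel (fun a _ => a = c)

section ListBefore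

variable {V : Type*}

lemma three_le_length_of_listBefore_of_listBefore {l : List V} (hl : l.Nodup) {x y z : V}
    (hxy : listBefore l x y) (hyz : listBefore l y z) : 3 ≤ l.length := by
  obtain ⟨i, j, hij, -, hj⟩ := hxy
  obtain ⟨j', k, hjk, hj', -⟩ := hyz
  obtain rfl : j = j' := hl.get_inj_iff.mp (hj.trans hj'.symm)
  have := k.isLt
  omega

lemma listBefore_triple_iff (a b d x y : V) :
    listBefore [a, b, d] x y ↔ (x = a ∧ (y = b ∨ y = d)) ∨ (x = b ∧ y = d) := by
  constructor
  · rintro ⟨i, j, hij, rfl, rfl⟩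
    fin_cases i <;> fin_cases j <;> simp_all
  · rintro (⟨rfl, rfl | rfl⟩ | ⟨rfl, rfl⟩)
    · exact ⟨0, 1, Fin.lt_def.mpr (by simp), rfl, rfl⟩
    · exact ⟨0, 2, Fin.lt_def.mpr (by simp), rfl, rfl⟩
    · exact ⟨1, 2, Fin.lt_def.mpr (by simp), rfl, rfl⟩

lemma singlePeakedOn_of_length_lt_three [DecidableEq V] (r : V → V → Prop) {l : List V}
    (hl : l.Nodup) (hlen : l.length < 3) : SinglePeakedOn l.toFinset r (listBefore l) := by
  rintro p - - x - y - (⟨hpx, hxy⟩ | ⟨hyx, hxp⟩)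
  · exact absurd (three_le_length_of_listBefore_of_listBefore hl hpx hxy) (by omega)
  · exact absurd (three_le_length_of_listBefore_of_listBefore hl hyx hxp) (by omega)

lemma singlePeakedOn_triple_iff [DecidableEq V] (r : V → V → Prop) {a b d : V}
    (hl : [a, b, d].Nodup) :
    SinglePeakedOn [a, b, d].toFinset r (listBefore [a, b, d]) ↔
      (r a b ∧ r a d → r b d) ∧ (r d a ∧ r d b → r b a) := by
  simp only [List.nodup_cons, List.mem_cons, List.not_mem_nil, or_false, not_or] at hl
  obtain ⟨⟨hab, had⟩, hbd, -⟩ := hl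
  constructor
  · intro h
    refine ⟨fun ⟨hab', had'⟩ => h a (by simp) ?_ b (by simp) d (by simp) ?_,
      fun ⟨hda, hdb⟩ => h d (by simp) ?_ b (by simp) a (by simp) ?_⟩
    · intro z hz hza
      simp only [List.mem_toFinset, List.mem_cons, List.not_mem_nil, or_false] at hz
      rcases hz with rfl | rfl | rfl <;> first | exact absurd rfl hza | assumption
    · simp [listBefore_triple_iff]
    · intro z hz hzd
      simp only [List.mem_toFinset, List.mem_cons, List.not_mem_nil, or_false] at hz
      rcases hz with rfl | rfl | rfl <;> first | exact absurd rfl hzd | assumption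
    · simp [listBefore_triple_iff]
  · rintro ⟨hleft, hright⟩ p - hpeak x - y - hpxy
    simp only [listBefore_triple_iff] at hpxy
    rcases hpxy with ⟨hpx, hxy⟩ | ⟨hyx, hxp⟩
    · obtain ⟨rfl, rfl, rfl⟩ : a = p ∧ b = x ∧ d = y := by grind
      exact hleft ⟨hpeak b (by simp) (Ne.symm hab), hpeak d (by simp) (Ne.symm had)⟩
    · obtain ⟨rfl, rfl, rfl⟩ : d = p ∧ b = x ∧ a = y := by grind
      exact hright ⟨hpeak a (by simp) had, hpeak b (by simp) hbd⟩

end ListBefore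

section Star

variable {V : Type*} {c : V}

lemma starGraph_adj {a b : V} : (starGraph c).Adj a b ↔ a ≠ b ∧ (a = c ∨ b = c) := by
  simp [starGraph, SimpleGraph.fromRel_adj]

lemma starGraph_eq_center_of_adj_of_adj {a b d : V} (hab : (starGraph c).Adj a b)
    (hbd : (starGraph c).Adj b d) (had : a ≠ d) : b = c := by
  rw [starGraph_adj] at hab hbd
  grind

lemma starGraph_isChain_triple {a d : V} (hac : a ≠ c) (hdc : d ≠ c) :
    [a, c, d].IsChain (starGraph c).Adj := by
  simp [starGraph_adj, hac, hdc, Ne.symm hdc]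

lemma starGraph_path_length_lt_three_or_eq_triple {l : List V} (hl : l.Nodup)
    (hchain : l.IsChain (starGraph c).Adj) : l.length < 3 ∨ ∃ a d, l = [a, c, d] := by
  match l, hl, hchain with
  | [], _, _ | [_], _, _ | [_, _], _, _ => left; simp
  | [a, b, d], hl, hchain =>
    simp only [List.isChain_cons_cons, List.isChain_singleton, and_true] at hchain
    obtain rfl := starGraph_eq_center_of_adj_of_adj hchain.1 hchain.2 (by simp at hl; tauto)
    exact Or.inr ⟨a, d, rfl⟩
  | a :: b :: d :: e :: _, hl, hchain =>
    simp only [List.isChain_cons_cons] at hchain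
    have hb := starGraph_eq_center_of_adj_of_adj hchain.1 hchain.2.1 (by simp at hl; tauto)
    have hd := starGraph_eq_center_of_adj_of_adj hchain.2.1 hchain.2.2.1 (by simp at hl; tauto)
    exact absurd (hb.trans hd.symm) (by simp at hl; tauto)

end Star

lemma rel_of_card_filter_rel_le_one {V : Type*} [Fintype V] {r : V → V → Prop}
    [DecidableRel r] [Std.Trichotomous r] {a c d : V}
    (hcard : (Finset.univ.filter fun x => r x c).card ≤ 1)
    (hac : r a c) (hda : d ≠ a) (hdc : d ≠ c) : r c d := by
  rcases trichotomous_of r c d with h | rfl | hrdc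
  · exact h
  · exact absurd rfl hdc
  · exact absurd (Finset.card_le_one.mp hcard d (by simpa) a (by simpa)) hda

theorem singlePeaked_on_star_iff_general
    {V : Type*} [Fintype V] [DecidableEq V] (c : V)
    (succ : V → V → Prop) [DecidableRel succ] (hsto : IsStrictTotalOrder V succ) :
    SinglePeakedOnTree (starGraph c) succ ↔
      (Finset.univ.filter fun x => succ x c).card ≤ 1 := by
  constructor
  · intro h
    refine Finset.card_le_one.mpr fun u hu v hv => by_contra fun huv => ?_
    simp only [Finset.mem_filter, Finset.mem_univ, true_and] at hu hv
    have hnd : [u, c, v].Nodup := by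
      simp [huv, ne_of_irrefl hu, Ne.symm (ne_of_irrefl hv)]
    have hpeak := (singlePeakedOn_triple_iff succ hnd).mp
      (h _ hnd (starGraph_isChain_triple (ne_of_irrefl hu) (ne_of_irrefl hv)))
    rcases trichotomous_of succ u v with huv' | rfl | hvu
    · exact asymm hv (hpeak.1 ⟨hu, huv'⟩)
    · exact huv rfl
    · exact asymm hu (hpeak.2 ⟨hvu, hv⟩)
  · intro hcard l hl hchain
    rcases starGraph_path_length_lt_three_or_eq_triple hl hchain with hlen | ⟨a, d, rfl⟩
    · exact singlePeakedOn_of_length_lt_three succ hl hlen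
    · have hnd := hl
      simp only [List.nodup_cons, List.mem_cons, List.not_mem_nil, or_false, not_or] at hnd
      obtain ⟨⟨hac, had⟩, hdc, -⟩ := hnd
      refine (singlePeakedOn_triple_iff succ hl).mpr ⟨fun h => ?_, fun h => ?_⟩
      · exact rel_of_card_filter_rel_le_one hcard h.1 (Ne.symm had) (Ne.symm hdc)
      · exact rel_of_card_filter_rel_le_one hcard h.2 had hac

/-- For a star with center `c` on `m ≥ 3` vertices, a linear order on the vertex set is
single peaked on the star if and only if `c` occupies the first or the second position,
i.e. at most one candidate is preferred to `c`. -/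
theorem singlePeaked_on_star_iff
    {V : Type*} [Fintype V] [DecidableEq V] (c : V) (hm : 3 ≤ Fintype.card V)
    (succ : V → V → Prop) [DecidableRel succ] (hsto : IsStrictTotalOrder V succ) :
    SinglePeakedOnTree (starGraph c) succ ↔
      (Finset.univ.filter fun x => succ x c).card ≤ 1 :=
  singlePeaked_on_star_iff_general c succ hsto
end

section
/- Let P = (≻₁, …, ≻ₙ) be a profile of linear orders on a finite candidate set C, every vote of which is single-peaked with respect to a fixed linear order ◁ on C. For each voter i let peak(i) be the candidate ranked first by ≻ᵢ. If a candidate c satisfies |{i : peak(i) ◁ c}| ≤ n/2 and |{i : c ◁ peak(i)}| ≤ n/2 (i.e., c is a median of the voters' peaks with respect to ◁), then c is a weak Condorcet winner of P. -/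
/-- A linear order `r` on `C` is single peaked with respect to a linear order `r'`:
letting `p` be the candidate ranked first by `r`, whenever `p ≻' x ≻' y` or
`y ≻' x ≻' p` we have `x ≻ y`. -/
def SinglePeakedWRT {C : Type*} (r r' : C → C → Prop) : Prop :=
  ∀ p : C, (∀ x : C, x ≠ p → r p x) →
    ∀ x y : C, ((r' p x ∧ r' x y) ∨ (r' y x ∧ r' x p)) → r x y

/-!
By single-peakedness, a voter who prefers `y` to `c` has its peak strictly on the side of `c`
where `y` lies. As `c` is a median of the peaks, at most half of the voters have their peak on
either side of `c`.
-/

namespace SinglePeakedWRT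

variable {C : Type*} {r lt : C → C → Prop}

theorem swap (h : SinglePeakedWRT r lt) : SinglePeakedWRT r (Function.swap lt) :=
  fun p hp x y hxy => h p hp x y (hxy.symm.imp And.symm And.symm)

variable [Std.Asymm r] [Std.Trichotomous lt] {p c y : C}

theorem lt_peak_of_rel (h : SinglePeakedWRT r lt) (hp : ∀ x, x ≠ p → r p x)
    (hcy : lt c y) (hrel : r y c) : lt c p := by
  rcases trichotomous_of lt c p with hcp | rfl | hpc
  · exact hcp
  · exact absurd (hp y fun hyc => irrefl_of r y (hyc ▸ hrel)) (asymm hrel)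
  · exact absurd (h p hp c y (.inl ⟨hpc, hcy⟩)) (asymm hrel)

theorem peak_lt_of_rel (h : SinglePeakedWRT r lt) (hp : ∀ x, x ≠ p → r p x)
    (hyc : lt y c) (hrel : r y c) : lt p c :=
  h.swap.lt_peak_of_rel (lt := Function.swap lt) hp hyc hrel

end SinglePeakedWRT

theorem median_peak_is_weakCondorcet_general
    {C : Type*} {n : ℕ}
    (P : Fin n → C → C → Prop) [∀ i, DecidableRel (P i)]
    (hP : ∀ i, IsStrictTotalOrder C (P i))
    (lt : C → C → Prop) [DecidableRel lt] (hlt : IsStrictTotalOrder C lt)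
    (hsp : ∀ i, SinglePeakedWRT (P i) lt)
    (peak : Fin n → C) (hpeak : ∀ i, ∀ x : C, x ≠ peak i → P i (peak i) x)
    (c : C)
    (hleft : 2 * (Finset.univ.filter fun i => lt (peak i) c).card ≤ n)
    (hright : 2 * (Finset.univ.filter fun i => lt c (peak i)).card ≤ n) :
    ∀ y : C, y ≠ c →
      2 * (Finset.univ.filter fun i => P i y c).card ≤ n := by
  intro y hy
  rcases trichotomous_of lt c y with hcy | rfl | hyc
  · refine le_trans (Nat.mul_le_mul_left 2 (Finset.card_le_card ?_)) hright
    exact Finset.monotone_filter_right _ fun i _ => (hsp i).lt_peak_of_rel (hpeak i) hcy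
  · exact absurd rfl hy
  · refine le_trans (Nat.mul_le_mul_left 2 (Finset.card_le_card ?_)) hleft
    exact Finset.monotone_filter_right _ fun i _ => (hsp i).peak_lt_of_rel (hpeak i) hyc

/-- Median voter theorem: for a profile of linear orders on a finite candidate set, each
single peaked with respect to a common axis `lt`, any candidate `c` that is a median of
the voters' peaks with respect to `lt` is a weak Condorcet winner. -/
theorem median_peak_is_weakCondorcet
    {C : Type*} [Fintype C] [DecidableEq C] {n : ℕ}
    (P : Fin n → C → C → Prop) [∀ i, DecidableRel (P i)]
    (hP : ∀ i, IsStrictTotalOrder C (P i))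
    (lt : C → C → Prop) [DecidableRel lt] (hlt : IsStrictTotalOrder C lt)
    (hsp : ∀ i, SinglePeakedWRT (P i) lt)
    (peak : Fin n → C) (hpeak : ∀ i, ∀ x : C, x ≠ peak i → P i (peak i) x)
    (c : C)
    (hleft : 2 * (Finset.univ.filter fun i => lt (peak i) c).card ≤ n)
    (hright : 2 * (Finset.univ.filter fun i => lt c (peak i)).card ≤ n) :
    ∀ y : C, y ≠ c →
      2 * (Finset.univ.filter fun i => P i y c).card ≤ n :=
  median_peak_is_weakCondorcet_general P hP lt hlt hsp peak hpeak c hleft hright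
end

section
/- Let T be a finite tree with vertex set C and let P = (≻₁, …, ≻ₙ) be a profile of linear orders on C each of which is single-peaked on T. Then P has a weak Condorcet winner. -/
/-!
Every voter's order has a peak, its top candidate. Take for `c` a median of the peaks, a vertex
minimising the total tree distance to them. If a voter prefers `y ≠ c` to `c`, single-peakedness
along the path from her peak to `y` forces that path to avoid `c`, so her peak lies in the branch
at `c` through the neighbour `b` of `c` towards `y`, i.e. it is closer to `b` than to `c`. Moving
from `c` to `b` changes every distance to a peak by exactly one, so by minimality of `c` at most
half of the peaks are closer to `b`.
-/

open SimpleGraph Finset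

theorem IsStrictTotalOrder.exists_forall_ne_rel {V : Type*} [Finite V] [Nonempty V]
    (r : V → V → Prop) [IsStrictTotalOrder V r] : ∃ p, ∀ x, x ≠ p → r p x := by
  obtain ⟨p, -, hp⟩ := (Finite.wellFounded_of_trans_of_irrefl r).has_min Set.univ Set.univ_nonempty
  refine ⟨p, fun x hx => ?_⟩
  rcases trichotomous_of r x p with hxp | rfl | hpx
  · exact absurd hxp (hp x trivial)
  · exact absurd rfl hx
  · exact hpx

section listBefore

variable {V : Type*} {l : List V} {c : V}

theorem listBefore_head_of_mem (hl : l ≠ []) (hc : c ∈ l) (hne : c ≠ l.head hl) :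
    listBefore l (l.head hl) c := by
  have hlen : 0 < l.length := List.length_pos_iff.mpr hl
  obtain ⟨j, rfl⟩ := List.mem_iff_get.mp hc
  refine ⟨⟨0, hlen⟩, j, Nat.pos_of_ne_zero fun hj => hne ?_, List.get_mk_zero hlen, rfl⟩
  simp [List.head_eq_getElem, hj]

theorem listBefore_of_mem_getLast (hl : l ≠ []) (hc : c ∈ l) (hne : c ≠ l.getLast hl) :
    listBefore l c (l.getLast hl) := by
  have hlen : 0 < l.length := List.length_pos_iff.mpr hl
  obtain ⟨j, rfl⟩ := List.mem_iff_get.mp hc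
  refine ⟨j, ⟨l.length - 1, by omega⟩, ?_, rfl, (List.getLast_eq_getElem hl).symm⟩
  have : (j : ℕ) ≠ l.length - 1 := fun hj => hne (by simp [List.getLast_eq_getElem, hj])
  exact Fin.mk_lt_mk.mpr (by omega)

end listBefore

namespace SimpleGraph

variable {V : Type*} {G : SimpleGraph V}

theorem IsAcyclic.length_eq_dist_of_isPath (hG : G.IsAcyclic) {u v : V} {w : G.Walk u v}
    (hw : w.IsPath) : w.length = G.dist u v := by
  obtain ⟨q, hq, hq_len⟩ := w.reachable.exists_path_of_dist
  have hwq : w = q := congrArg Subtype.val ((hG.subsingleton_path u v).elim ⟨w, hw⟩ ⟨q, hq⟩)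
  rw [hwq, hq_len]

theorem IsAcyclic.dist_lt_dist_of_adj (hG : G.IsAcyclic) [DecidableEq V] {b c p : V}
    (hcb : G.Adj c b) (w : G.Walk b p) (hw : c ∉ w.support) : G.dist b p < G.dist c p := by
  have hbypass : c ∉ w.bypass.support := fun h => hw (w.support_bypass_subset_support h)
  have hpath : (Walk.cons hcb w.bypass).IsPath := w.bypass_isPath.cons hbypass
  rw [← hG.length_eq_dist_of_isPath hpath, Walk.length_cons]
  exact Nat.lt_succ_of_le (G.dist_le _)

theorem IsTree.two_mul_card_dist_lt_le {ι : Type*} [Fintype ι] (hG : G.IsTree) (f : ι → V)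
    {b c : V} (hcb : G.Adj c b) (hc : ∑ i, G.dist c (f i) ≤ ∑ i, G.dist b (f i)) :
    2 * #{i | G.dist b (f i) < G.dist c (f i)} ≤ Fintype.card ι := by
  have hstep : ∀ i, G.dist b (f i) + (if G.dist b (f i) < G.dist c (f i) then 2 else 0) =
      G.dist c (f i) + 1 := by
    intro i
    have := hG.dist_eq_dist_add_one_of_adj (f i) hcb
    rw [G.dist_comm, G.dist_comm (u := f i)] at this
    split_ifs <;> omega
  have hsum := sum_congr rfl fun i (_ : i ∈ univ) => hstep i
  rw [sum_add_distrib, sum_add_distrib, sum_ite, sum_const_zero,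
    sum_const, sum_const, smul_eq_mul, smul_eq_mul, card_univ] at hsum
  omega

end SimpleGraph

namespace SinglePeakedOnTree

variable {V : Type*} [DecidableEq V] {G : SimpleGraph V} {r : V → V → Prop} {p y c : V}

theorem rel_of_mem_support (hsp : SinglePeakedOnTree G r) (hpeak : ∀ x, x ≠ p → r p x)
    {w : G.Walk p y} (hw : w.IsPath) (hc : c ∈ w.support) (hcy : c ≠ y) : r c y := by
  by_cases hcp : c = p
  · exact hcp ▸ hpeak y (hcp ▸ hcy).symm
  have hpc := listBefore_head_of_mem w.support_ne_nil hc (by simpa using hcp)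
  have hcy' := listBefore_of_mem_getLast w.support_ne_nil hc (by simpa using hcy)
  simp only [Walk.head_support, Walk.getLast_support] at hpc hcy'
  exact hsp w.support hw.support_nodup w.isChain_adj_support p (by simp)
    (fun x _ hx => hpeak x hx) c (by simpa using hc) y (by simp) (Or.inl ⟨hpc, hcy'⟩)

theorem dist_lt_dist_of_rel [IsStrictTotalOrder V r] (hT : G.IsTree)
    (hsp : SinglePeakedOnTree G r) (hpeak : ∀ x, x ≠ p → r p x) {b : V} (hcb : G.Adj c b)
    (u : G.Walk b y) (hu : c ∉ u.support) (hyc : r y c) : G.dist b p < G.dist c p := by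
  obtain ⟨w, hw, -⟩ := (hT.connected p y).exists_path_of_dist
  have hcw : c ∉ w.support := fun hc =>
    asymm hyc (hsp.rel_of_mem_support hpeak hw hc fun h => irrefl y (h ▸ hyc))
  refine hT.isAcyclic.dist_lt_dist_of_adj hcb (u.append w.reverse) ?_
  simp [Walk.mem_support_append_iff, hu, hcw]

end SinglePeakedOnTree

/-- Every profile of linear orders on the vertex set of a finite tree, each of which is
single peaked on the tree, has a weak Condorcet winner. -/
theorem singlePeaked_on_tree_weakCondorcet_exists
    {V : Type*} [Fintype V] [DecidableEq V] (G : SimpleGraph V) (hT : G.IsTree)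
    {n : ℕ} (P : Fin n → V → V → Prop) [∀ i, DecidableRel (P i)]
    (hP : ∀ i, IsStrictTotalOrder V (P i))
    (hsp : ∀ i, SinglePeakedOnTree G (P i)) :
    ∃ c : V, ∀ y : V, y ≠ c →
      2 * (Finset.univ.filter fun i => P i y c).card ≤ n := by
  have : Nonempty V := hT.connected.nonempty
  choose peak hpeak using fun i => haveI := hP i; IsStrictTotalOrder.exists_forall_ne_rel (P i)
  obtain ⟨c, -, hc⟩ := exists_min_image univ (fun v => ∑ i, G.dist v (peak i)) univ_nonempty
  refine ⟨c, fun y hy => ?_⟩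
  obtain ⟨w, hw, -⟩ := (hT.connected c y).exists_path_of_dist
  obtain ⟨b, hcb, u, rfl⟩ := Walk.exists_eq_cons_of_ne hy.symm w
  have hu : c ∉ u.support := (Walk.cons_isPath_iff hcb u).mp hw |>.2
  calc 2 * #{i | P i y c} ≤ 2 * #{i | G.dist b (peak i) < G.dist c (peak i)} := by
        gcongr with i
        have := hP i
        exact (hsp i).dist_lt_dist_of_rel hT (hpeak i) hcb u hu
    _ ≤ n := by
        simpa using hT.two_mul_card_dist_lt_le peak hcb (hc b (mem_univ b))
end

section
/- Let P = (≻₁, …, ≻ₙ) be a profile of linear orders on a finite candidate set C that has a Condorcet winner, and let (X₁, …, X_t) be a partition of C into nonempty sets. Suppose that for each i the restricted profile P(Xᵢ) has a Condorcet winner wᵢ, and that the restricted profile P({w₁, …, w_t}) has a Condorcet winner w. Then w is a Condorcet winner of P. -/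
/-- Let `P` be a profile of linear orders on a finite candidate set `C` that has a
Condorcet winner, and let `X₁, …, X_t` be a partition of `C` into nonempty sets.
Suppose each restricted profile `P(Xⱼ)` has a Condorcet winner `wⱼ`, and the restricted
profile `P({w₁, …, w_t})` has a Condorcet winner `W`.  Then `W` is a Condorcet winner
of `P`.  (A Condorcet winner over a candidate set beats every other candidate of that
set in strictly more than half of the votes; restrictions of linear orders agree with
the original orders, so all comparisons are stated via `P` itself.) -/
theorem condorcet_divide_and_conquer
    {C : Type*} [Fintype C] [DecidableEq C] {n t : ℕ}
    (P : Fin n → C → C → Prop) [∀ i, DecidableRel (P i)]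
    (hP : ∀ i, IsStrictTotalOrder C (P i))
    (hCW : ∃ z : C, ∀ y : C, y ≠ z →
      n < 2 * (Finset.univ.filter fun i => P i z y).card)
    (X : Fin t → Finset C)
    (hne : ∀ j, (X j).Nonempty)
    (hdisj : ∀ j j', j ≠ j' → Disjoint (X j) (X j'))
    (hcover : ∀ x : C, ∃ j, x ∈ X j)
    (w : Fin t → C) (hwmem : ∀ j, w j ∈ X j)
    (hw : ∀ j, ∀ y ∈ X j, y ≠ w j →
      n < 2 * (Finset.univ.filter fun i => P i (w j) y).card)
    (W : C) (hWmem : ∃ j, W = w j)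
    (hW : ∀ j, w j ≠ W →
      n < 2 * (Finset.univ.filter fun i => P i W (w j)).card) :
    ∀ y : C, y ≠ W →
      n < 2 * (Finset.univ.filter fun i => P i W y).card := by
  obtain ⟨z, hz⟩ := hCW
  -- two candidates cannot both majority-beat each other
  have asym : ∀ a b : C,
      n < 2 * (Finset.univ.filter fun i => P i a b).card →
      n < 2 * (Finset.univ.filter fun i => P i b a).card → False := by
    intro a b h1 h2
    have hdis : Disjoint (Finset.univ.filter fun i => P i a b)
        (Finset.univ.filter fun i => P i b a) := by
      refine Finset.disjoint_left.2 fun i hi hi' => ?_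
      simp only [Finset.mem_filter] at hi hi'
      exact (hP i).irrefl a ((hP i).trans a b a hi.2 hi'.2)
    have hle : (Finset.univ.filter fun i => P i a b).card
        + (Finset.univ.filter fun i => P i b a).card ≤ n := by
      rw [← Finset.card_union_of_disjoint hdis]
      simpa using Finset.card_le_univ ((Finset.univ.filter fun i => P i a b) ∪ (Finset.univ.filter fun i => P i b a))
    omega
  -- z equals w j for its block j
  obtain ⟨j, hj⟩ := hcover z
  have hzwj : z = w j := by
    by_contra hne'
    exact asym _ _ (hw j z hj hne') (hz (w j) (Ne.symm hne'))
  subst hzwj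
  -- w j = W
  have hzW : w j = W := by
    by_contra hne'
    exact asym _ _ (hW j hne') (hz W (Ne.symm hne'))
  intro y hy
  exact hzW ▸ hz y (hzW ▸ hy)
end
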